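/- With notation as above, for each homogeneous x ∈ a, the map ρ(x) : h → h (the h-component of ad(x)|_h) is a derivation of (h, [·,·]_h) that is skew-symmetric with respect to B_h: ρ(x)([u,v]_h) = [ρ(x)(u), v]_h + (-1)^{|x||u|}[u, ρ(x)(v)]_h and B_h(ρ(x)(u), v) = -(-1)^{|x||u|} B_h(u, ρ(x)(v)). -/

import Mathlib

/-- The sign `(-1)^{ij}` for `i j : ZMod 2`. -/
def sgn (F : Type*) [Field F] (i j : ZMod 2) : F := (-1) ^ (i * j).val

/-- The orthogonal `J^⊥ = {w : B(j, w) = 0 for all j ∈ J}` of a subspace with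
respect to a bilinear form `B`. -/
def orth {F V : Type*} [Field F] [AddCommGroup V] [Module F V]
    (B : V →ₗ[F] V →ₗ[F] F) (J : Submodule F V) : Submodule F V where
  carrier := {w | ∀ j ∈ J, B j w = 0}
  add_mem' := by
    intro w w' hw hw' j hj
    simp [hw j hj, hw' j hj]
  zero_mem' := by
    intro j hj
    simp
  smul_mem' := by
    intro c w hw j hj
    simp [hw j hj]


private lemma sgn_sq {F : Type*} [Field F] (a b : ZMod 2) : sgn F a b * sgn F a b = 1 := by
  unfold sgn; rw [← mul_pow]; norm_num

private lemma sgn_comm {F : Type*} [Field F] (a b : ZMod 2) : sgn F a b = sgn F b a := by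
  unfold sgn; rw [mul_comm]

private lemma sgn_L1 {F : Type*} [Field F] (i du dv : ZMod 2) :
    sgn F i dv * (sgn F du i * sgn F dv i) = sgn F i du := by
  have h2 : ∀ a : ZMod 2, a = 0 ∨ a = 1 := by decide
  rcases h2 i with rfl | rfl <;> rcases h2 du with rfl | rfl <;> rcases h2 dv with rfl | rfl <;>
    norm_num [sgn] <;> simp [show ((2:ZMod 2)).val = 0 from rfl, ZMod.val_one]

private lemma sgn_L2 {F : Type*} [Field F] (i du dv : ZMod 2) :
    sgn F i dv * (sgn F dv du * sgn F dv (i + du)) = 1 := by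
  have h2 : ∀ a : ZMod 2, a = 0 ∨ a = 1 := by decide
  rcases h2 i with rfl | rfl <;> rcases h2 du with rfl | rfl <;> rcases h2 dv with rfl | rfl <;>
    norm_num [sgn] <;> simp [show ((2:ZMod 2)).val = 0 from rfl, ZMod.val_one]

private lemma aux_solve {F V : Type*} [Field F] [AddCommGroup V] [Module F V]
    (p q r s w t : F) (A Bv D : V)
    (h1 : p • A + q • ((-r) • Bv) + s • ((-w) • D) = 0)
    (hp : p * p = 1) (ht : p * (q * r) = t) (hw : p * (s * w) = 1) :
    A = D + t • Bv := by
  have h2 : A - (D + t • Bv) = p • (p • A + q • ((-r) • Bv) + s • ((-w) • D)) := by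
    match_scalars
    · linear_combination -hp
    · linear_combination hw
    · linear_combination ht
  rw [h1, smul_zero] at h2
  exact sub_eq_zero.mp h2

/-- in the decomposition `g = aa ⊕ hh ⊕ I`, for each homogeneous
`x ∈ aa` the map `ρ(x) : hh → hh` is a derivation of `(hh, [·,·]_h)` which is
skew-symmetric with respect to `B_h`:
`ρ(x)([u,v]_h) = [ρ(x)(u), v]_h + (-1)^{|x||u|}[u, ρ(x)(v)]_h` and
`B_h(ρ(x)(u), v) = -(-1)^{|x||u|} B_h(u, ρ(x)(v))`. -/
theorem rho_is_skew_derivation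
    (F V : Type*) [Field F] [IsAlgClosed F] [CharZero F]
    [AddCommGroup V] [Module F V] [FiniteDimensional F V]
    (g : ZMod 2 → Submodule F V) (hg : DirectSum.IsInternal g)
    (br : V →ₗ[F] V →ₗ[F] V)
    -- `(g, [·,·])` is a Lie super algebra
    (hbr_even : ∀ i j : ZMod 2, ∀ x y : V, x ∈ g i → y ∈ g j → br x y ∈ g (i + j))
    (hbr_skew : ∀ i j : ZMod 2, ∀ x y : V, x ∈ g i → y ∈ g j →
      br x y = -(sgn F i j) • br y x)
    (hbr_jac : ∀ i j k : ZMod 2, ∀ x y z : V, x ∈ g i → y ∈ g j → z ∈ g k →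
      sgn F i k • br x (br y z) + sgn F j i • br y (br z x)
        + sgn F k j • br z (br x y) = 0)
    -- `B` is an invariant metric of degree `δ`
    (δ : ZMod 2) (B : V →ₗ[F] V →ₗ[F] F)
    (hB_symm : ∀ i j : ZMod 2, ∀ x y : V, x ∈ g i → y ∈ g j →
      B x y = sgn F i j * B y x)
    (hB_inv : ∀ x y z : V, B (br x y) z = B x (br y z))
    (hB_nd : ∀ x : V, (∀ y : V, B x y = 0) → x = 0)
    (hB_deg : ∀ i j : ZMod 2, ∀ x y : V, x ∈ g i → y ∈ g j → i + j ≠ δ → B x y = 0)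
    -- `g` is non-simple of dimension `> 1`
    (hdim : 1 < Module.finrank F V)
    (hns : ∃ J : Submodule F V, (∀ x : V, ∀ v ∈ J, br x v ∈ J) ∧
      J = (J ⊓ g 0) ⊔ (J ⊓ g 1) ∧ J ≠ ⊥ ∧ J ≠ ⊤)
    -- `g` is indecomposable
    (hind : ¬ ∃ J : Submodule F V, (∀ x : V, ∀ v ∈ J, br x v ∈ J) ∧
      J = (J ⊓ g 0) ⊔ (J ⊓ g 1) ∧ J ≠ ⊥ ∧ J ≠ ⊤ ∧ IsCompl J (orth B J))
    -- `I` is a minimal graded ideal, contained in `I^⊥` and abelian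
    (I : Submodule F V)
    (hI_ideal : ∀ x : V, ∀ v ∈ I, br x v ∈ I)
    (hI_graded : I = (I ⊓ g 0) ⊔ (I ⊓ g 1))
    (hI_ne : I ≠ ⊥)
    (hI_min : ∀ J : Submodule F V, (∀ x : V, ∀ v ∈ J, br x v ∈ J) →
      J = (J ⊓ g 0) ⊔ (J ⊓ g 1) → J ≤ I → J = ⊥ ∨ J = I)
    (hI_deg : I ≤ orth B I)
    -- graded complements: `I^⊥ = hh ⊕ I`, `hh^⊥ = aa ⊕ I`, `aa` isotropic,
    -- `g = aa ⊕ hh ⊕ I`, and `[I, I^⊥] = 0`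
    (hh aa : Submodule F V)
    (hhh_graded : hh = (hh ⊓ g 0) ⊔ (hh ⊓ g 1))
    (haa_graded : aa = (aa ⊓ g 0) ⊔ (aa ⊓ g 1))
    (hIperp : hh ⊔ I = orth B I)
    (hhhperp : aa ⊔ I = orth B hh)
    (haa_iso : ∀ x ∈ aa, ∀ y ∈ aa, B x y = 0)
    (hdisj1 : Disjoint hh I)
    (hdisj2 : Disjoint aa (hh ⊔ I))
    (hsum : aa ⊔ (hh ⊔ I) = ⊤)
    (hcentral : ∀ α ∈ I, ∀ w ∈ hh ⊔ I, br α w = 0)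
    -- components of the bracket with respect to `g = aa ⊕ hh ⊕ I`
    (bra lam mu rho tau brh gam : V →ₗ[F] V →ₗ[F] V)
    (hcomp_a : ∀ x ∈ aa, ∀ y ∈ aa, br x y = bra x y + lam x y + mu x y ∧
      bra x y ∈ aa ∧ lam x y ∈ hh ∧ mu x y ∈ I)
    (hcomp_ah : ∀ x ∈ aa, ∀ u ∈ hh, br x u = rho x u + tau x u ∧
      rho x u ∈ hh ∧ tau x u ∈ I)
    (hcomp_h : ∀ u ∈ hh, ∀ v ∈ hh, br u v = brh u v + gam u v ∧
      brh u v ∈ hh ∧ gam u v ∈ I)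
    (hcomp_aI : ∀ x ∈ aa, ∀ α ∈ I, br x α ∈ I)
    -- `B(hh, I) = 0`
    (hB_hI : ∀ u ∈ hh, ∀ α ∈ I, B u α = 0)
    (i du dv : ZMod 2) (x u v : V)
    (hxa : x ∈ aa) (hx : x ∈ g i) (huh : u ∈ hh) (hu : u ∈ g du)
    (hvh : v ∈ hh) (hv : v ∈ g dv) :
    rho x (brh u v) = brh (rho x u) v + sgn F i du • brh u (rho x v) ∧
    B (rho x u) v = -(sgn F i du) * B u (rho x v) := by
  classical
  -- pieces of the decomposition
  have hdisjHI : ∀ h α : V, h ∈ hh → α ∈ I → h + α = 0 → h = 0 ∧ α = 0 := by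
    intro h α hmh hmα hsum0
    have hhe : h = -α := eq_neg_of_add_eq_zero_left hsum0
    have hmem : h ∈ hh ⊓ I := ⟨hmh, hhe ▸ neg_mem hmα⟩
    have h0 : h = 0 := (Submodule.mem_bot F).mp (hdisj1.le_bot hmem)
    refine ⟨h0, ?_⟩
    have := hhe ▸ h0
    simpa [neg_eq_zero] using this.symm
  have hdisjHI' : ∀ a b c d : V, a ∈ hh → b ∈ I → c ∈ hh → d ∈ I →
      a + b = c + d → a = c ∧ b = d := by
    intro a b c d ha hb hc hd he
    have : (a - c) + (b - d) = 0 := by rw [← sub_eq_zero] at he; abel_nf at he ⊢; linear_combination (norm := abel) he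
    obtain ⟨h1, h2⟩ := hdisjHI _ _ (sub_mem ha hc) (sub_mem hb hd) this
    exact ⟨sub_eq_zero.mp h1, sub_eq_zero.mp h2⟩
  have gdisj : ∀ w : V, w ∈ g 0 → w ∈ g 1 → w = 0 := by
    intro w h0 h1
    have hpd := hg.submodule_iSupIndep.pairwiseDisjoint
      (show (0 : ZMod 2) ≠ 1 by decide)
    exact (Submodule.mem_bot F).mp (hpd.le_bot ⟨h0, h1⟩)
  -- homogeneity of the components of a homogeneous element of hh ⊔ I
  have hgk : ∀ (k : ZMod 2) (h α : V), h ∈ hh → α ∈ I → h + α ∈ g k →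
      h ∈ g k ∧ α ∈ g k := by
    intro k h α hmh hmα hk
    have hh' : h ∈ (hh ⊓ g 0) ⊔ (hh ⊓ g 1) := hhh_graded ▸ hmh
    have hα' : α ∈ (I ⊓ g 0) ⊔ (I ⊓ g 1) := hI_graded ▸ hmα
    obtain ⟨h0, hh0, h1, hh1, hhsum⟩ := Submodule.mem_sup.mp hh'
    obtain ⟨α0, hα0, α1, hα1, hαsum⟩ := Submodule.mem_sup.mp hα'
    fin_cases k
    · have he : (h1 + α1) = (h + α) - (h0 + α0) := by
        rw [← hhsum, ← hαsum]; abel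
      have hm1 : h1 + α1 ∈ g 1 := add_mem hh1.2 hα1.2
      have hm0 : h1 + α1 ∈ g 0 := he ▸ sub_mem hk (add_mem hh0.2 hα0.2)
      have hz := gdisj _ hm0 hm1
      obtain ⟨hz1, hz2⟩ := hdisjHI _ _ hh1.1 hα1.1 hz
      constructor
      · rw [← hhsum, hz1, add_zero]; exact hh0.2
      · rw [← hαsum, hz2, add_zero]; exact hα0.2
    · have he : (h0 + α0) = (h + α) - (h1 + α1) := by
        rw [← hhsum, ← hαsum]; abel
      have hm0 : h0 + α0 ∈ g 0 := add_mem hh0.2 hα0.2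
      have hm1 : h0 + α0 ∈ g 1 := he ▸ sub_mem hk (add_mem hh1.2 hα1.2)
      have hz := gdisj _ hm0 hm1
      obtain ⟨hz1, hz2⟩ := hdisjHI _ _ hh0.1 hα0.1 hz
      constructor
      · rw [← hhsum, hz1, zero_add]; exact hh1.2
      · rw [← hαsum, hz2, zero_add]; exact hα1.2
  -- components of br x u, br x v, br u v
  obtain ⟨hxu_eq, hρu_hh, hτu_I⟩ := hcomp_ah x hxa u huh
  obtain ⟨hxv_eq, hρv_hh, hτv_I⟩ := hcomp_ah x hxa v hvh
  obtain ⟨huv_eq, hbrhuv_hh, hgamuv_I⟩ := hcomp_h u huh v hvh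
  have hxu_g : rho x u ∈ g (i + du) ∧ tau x u ∈ g (i + du) := by
    refine hgk _ _ _ hρu_hh hτu_I ?_
    rw [← hxu_eq]; exact hbr_even i du x u hx hu
  have hxv_g : rho x v ∈ g (i + dv) ∧ tau x v ∈ g (i + dv) := by
    refine hgk _ _ _ hρv_hh hτv_I ?_
    rw [← hxv_eq]; exact hbr_even i dv x v hx hv
  -- bracket of hh with I vanishes (on homogeneous elements)
  have hhI_zero : ∀ (a b : ZMod 2) (wu α : V), wu ∈ hh → wu ∈ g a → α ∈ I →
      α ∈ g b → br wu α = 0 := by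
    intro a b wu α hwh hwg hαI hαg
    rw [hbr_skew a b wu α hwg hαg,
      hcentral α hαI wu (Submodule.mem_sup_left hwh), smul_zero]
  constructor
  · -- the derivation property
    have jac := hbr_jac i du dv x u v hx hu hv
    -- rewrite term 1
    have E1 : br x (br u v) = rho x (brh u v) +
        (tau x (brh u v) + br x (gam u v)) := by
      rw [huv_eq, map_add, (hcomp_ah x hxa (brh u v) hbrhuv_hh).1]; abel
    -- rewrite term 2
    have E2 : br u (br v x) = -(sgn F dv i) • ((brh u (rho x v)) + gam u (rho x v)) := by
      rw [hbr_skew dv i v x hv hx, map_smul, hxv_eq, map_add,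
        hhI_zero du (i + dv) u (tau x v) huh hu hτv_I hxv_g.2, add_zero,
        (hcomp_h u huh (rho x v) hρv_hh).1]
    -- rewrite term 3
    have E3 : br v (br x u) = brh v (rho x u) + gam v (rho x u) := by
      rw [hxu_eq, map_add,
        hhI_zero dv (i + du) v (tau x u) hvh hv hτu_I hxu_g.2, add_zero,
        (hcomp_h v hvh (rho x u) hρu_hh).1]
    rw [E1, E2, E3] at jac
    -- split into hh-part and I-part
    set A := rho x (brh u v) with hA
    set Bv := brh u (rho x v) with hBv
    set C := brh v (rho x u) with hC
    have hA_hh : A ∈ hh := (hcomp_ah x hxa (brh u v) hbrhuv_hh).2.1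
    have hBv_hh : Bv ∈ hh := (hcomp_h u huh (rho x v) hρv_hh).2.1
    have hC_hh : C ∈ hh := (hcomp_h v hvh (rho x u) hρu_hh).2.1
    have hQ1_I : tau x (brh u v) + br x (gam u v) ∈ I :=
      add_mem (hcomp_ah x hxa (brh u v) hbrhuv_hh).2.2
        (hcomp_aI x hxa (gam u v) hgamuv_I)
    have hQ2_I : gam u (rho x v) ∈ I := (hcomp_h u huh (rho x v) hρv_hh).2.2
    have hQ3_I : gam v (rho x u) ∈ I := (hcomp_h v hvh (rho x u) hρu_hh).2.2
    have hsplit : (sgn F i dv • A + sgn F du i • ((-(sgn F dv i)) • Bv)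
          + sgn F dv du • C)
        + (sgn F i dv • (tau x (brh u v) + br x (gam u v))
          + sgn F du i • ((-(sgn F dv i)) • gam u (rho x v))
          + sgn F dv du • gam v (rho x u)) = 0 := by
      rw [← jac]; module
    have hHpart0 : sgn F i dv • A + sgn F du i • ((-(sgn F dv i)) • Bv)
        + sgn F dv du • C = 0 := by
      have hmemh : sgn F i dv • A + sgn F du i • ((-(sgn F dv i)) • Bv)
          + sgn F dv du • C ∈ hh :=
        add_mem (add_mem (Submodule.smul_mem _ _ hA_hh)
          (Submodule.smul_mem _ _ (Submodule.smul_mem _ _ hBv_hh)))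
          (Submodule.smul_mem _ _ hC_hh)
      have hmemI : sgn F i dv • (tau x (brh u v) + br x (gam u v))
          + sgn F du i • ((-(sgn F dv i)) • gam u (rho x v))
          + sgn F dv du • gam v (rho x u) ∈ I :=
        add_mem (add_mem (Submodule.smul_mem _ _ hQ1_I)
          (Submodule.smul_mem _ _ (Submodule.smul_mem _ _ hQ2_I)))
          (Submodule.smul_mem _ _ hQ3_I)
      exact (hdisjHI _ _ hmemh hmemI hsplit).1
    -- skew-symmetry of brh on homogeneous elements
    have hCD : C = (-(sgn F dv (i + du))) • brh (rho x u) v := by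
      have hsk := hbr_skew dv (i + du) v (rho x u) hv hxu_g.1
      rw [(hcomp_h v hvh (rho x u) hρu_hh).1,
        (hcomp_h (rho x u) hρu_hh v hvh).1, smul_add] at hsk
      exact (hdisjHI' _ _ _ _ hC_hh hQ3_I
        (Submodule.smul_mem _ _ (hcomp_h (rho x u) hρu_hh v hvh).2.1)
        (Submodule.smul_mem _ _ (hcomp_h (rho x u) hρu_hh v hvh).2.2) hsk).1
    rw [hCD] at hHpart0
    exact aux_solve (sgn F i dv) (sgn F du i) (sgn F dv i) (sgn F dv du)
      (sgn F dv (i + du)) (sgn F i du) A Bv (brh (rho x u) v) hHpart0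
      (sgn_sq i dv) (sgn_L1 i du dv) (sgn_L2 i du dv)
  · -- skew-symmetry of B
    have hIo : ∀ α ∈ I, ∀ w ∈ hh, B α w = 0 := by
      intro α hα w hw
      have hwo : w ∈ orth B I := hIperp ▸ Submodule.mem_sup_left hw
      exact hwo α hα
    have h1 : B (rho x u) v = B x (br u v) := by
      have ht : B (tau x u) v = 0 := hIo _ hτu_I v hvh
      have : B (br x u) v = B (rho x u) v + B (tau x u) v := by
        rw [hxu_eq]; simp
      rw [← hB_inv x u v, this, ht, add_zero]
    have h2 : B u (rho x v) = -(sgn F du i) * B x (br u v) := by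
      have ht : B u (tau x v) = 0 := hB_hI u huh _ hτv_I
      have e4 : br u x = -(sgn F du i) • br x u := hbr_skew du i u x hu hx
      have e5 : B u (br x v) = -(sgn F du i) * B (br x u) v := by
        rw [← hB_inv u x v, e4]; simp
      have e6 : B u (br x v) = B u (rho x v) := by
        rw [hxv_eq, map_add, ht, add_zero]
      rw [← e6, e5, hB_inv x u v]
    rw [h1, h2, ← mul_assoc]
    have : -(sgn F i du) * -(sgn F du i) = 1 := by
      rw [neg_mul_neg, sgn_comm i du, sgn_sq]
    rw [this, one_mul]
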